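/- Let 𝒜 = {A_α : α < ω₂} be a maximal antichain in P(ω₁)/NS, indexed by ordinals below ω₂. Then the set S = {σ ∈ [ω₂]^ω : ω₁ ∈ σ and ∃α ∈ σ such that σ ∩ ω₁ ∈ A_α} is projective stationary: for every stationary B ⊆ ω₁, the set {σ ∈ S : σ ∩ ω₁ ∈ B} is stationary in [ω₂]^ω. -/

import Mathlib

/-- The first uncountable ordinal. -/
noncomputable def ω1 : Ordinal.{0} := (Cardinal.aleph 1).ord
/-- The second uncountable ordinal. -/
noncomputable def ω2 : Ordinal.{0} := (Cardinal.aleph 2).ord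

-- The order type of a set of ordinals (correct whenever the set is small, e.g. countable).
open Classical in
noncomputable def otp (σ : Set Ordinal.{0}) : Ordinal.{0} :=
  if h : ∃ o : Ordinal.{0}, Ordinal.lift.{1, 0} o =
      Ordinal.type ((· < ·) : σ → σ → Prop) then h.choose else 0

/-- `σ ∈ [α]^ω`: σ is a countably infinite subset of (the ordinals below) α. -/
def MemCtble (α : Ordinal.{0}) (σ : Set Ordinal.{0}) : Prop :=
  σ.Countable ∧ σ.Infinite ∧ ∀ x ∈ σ, x < α

/-- `C` is a club subset of `[α]^ω`: all members lie in `[α]^ω`, `C` is closed under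
unions of increasing ω-chains, and `C` is cofinal under inclusion. -/
def IsClubIn (α : Ordinal.{0}) (C : Set (Set Ordinal.{0})) : Prop :=
  (∀ σ ∈ C, MemCtble α σ) ∧
  (∀ f : ℕ → Set Ordinal.{0}, (∀ n, f n ∈ C) → (∀ n, f n ⊆ f (n + 1)) →
    (⋃ n, f n) ∈ C) ∧
  (∀ σ, MemCtble α σ → ∃ τ ∈ C, σ ⊆ τ)

/-- `S` is stationary in `[α]^ω`: it meets every club of `[α]^ω`. -/
def StatIn (α : Ordinal.{0}) (S : Set (Set Ordinal.{0})) : Prop :=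
  ∀ C, IsClubIn α C → (S ∩ C).Nonempty

/-- `C` is a closed unbounded subset of the ordinal `κ`. -/
def IsClubBelow (κ : Ordinal.{0}) (C : Set Ordinal.{0}) : Prop :=
  (∀ x ∈ C, x < κ) ∧ (∀ β < κ, ∃ x ∈ C, β ≤ x) ∧
  (∀ S : Set Ordinal.{0}, S ⊆ C → S.Nonempty → sSup S < κ → sSup S ∈ C)

/-- `S` is a stationary subset of the ordinal `κ`: it meets every club of `κ`. -/
def StatBelow (κ : Ordinal.{0}) (S : Set Ordinal.{0}) : Prop :=
  ∀ C, IsClubBelow κ C → (S ∩ C).Nonempty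

/-- The tilde operation: `α ∈ tilde X` iff `ω1 ≤ α < ω2` and
`{σ ∈ [α]^ω : otp σ ∈ X}` contains a club of `[α]^ω`. -/
def tilde (X : Set Ordinal.{0}) : Set Ordinal.{0} :=
  {α | ω1 ≤ α ∧ α < ω2 ∧ ∃ C, IsClubIn α C ∧ C ⊆ {σ | otp σ ∈ X}}

/-- `σ ∩ ω₁` equals the ordinal `γ` (i.e. as sets, `σ ∩ ω₁ = {x : x < γ}`). -/
def MeetO1 (σ : Set Ordinal.{0}) (γ : Ordinal.{0}) : Prop :=
  σ ∩ Set.Iio ω1 = Set.Iio γ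

/-!
Fix a club `C ⊆ [κ]^ω` with `ω₁ ≤ κ` and a seed `τ ∈ [κ]^ω`. Let `up` enlarge every set and send
members of `[κ]^ω` into `C`, and build the chain `σ_i = ⋃_{j<i} up ({j} ∪ σ_j ∪ τ)`, which is
increasing and continuous by construction; for `0 < i < ω₁` it lies in `C`, since `C` is closed
under countable increasing unions. The ordinals `γ < ω₁` closed under
`j ↦ sup (up ({j} ∪ σ_j ∪ τ) ∩ ω₁)` form a club of `ω₁`, and at each of them `σ_γ ∩ ω₁ = γ`.

For the theorem, maximality of the antichain gives `α < ω₂` with `B ∩ A_α` stationary; seeding the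
chain with `ω₁` and `α`, a point of `B ∩ A_α` in that club yields the required `σ_γ ∈ C`.
-/

open Cardinal Ordinal Order Set

theorem ω1_eq_omega_one : ω1 = (ω₁ : Ordinal.{0}) := Cardinal.ord_aleph 1

theorem ω1_lt_ω2 : ω1 < ω2 :=
  Cardinal.ord_lt_ord.mpr (Cardinal.aleph_lt_aleph.mpr one_lt_two)

theorem aleph0_lt_cof_ω1 : ℵ₀ < ω1.cof := by
  simp [ω1_eq_omega_one]

theorem sSup_lt_ω1 {s : Set Ordinal.{0}} (hs : s.Countable) (h : s ⊆ Iio ω1) :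
    sSup s < ω1 := by
  have := hs.to_subtype
  rw [sSup_eq_iSup', ω1_eq_omega_one]
  exact Ordinal.iSup_lt_omega_one fun x => ω1_eq_omega_one ▸ h x.2

theorem countable_Iio_of_lt_ω1 {i : Ordinal.{0}} (hi : i < ω1) : (Iio i).Countable := by
  rw [← le_aleph0_iff_set_countable, Cardinal.mk_Iio_ordinal, Cardinal.lift_le_aleph0,
    ← lt_aleph_one_iff]
  exact Cardinal.lt_ord.mp hi

theorem iUnion_mem_of_monotone {β ι : Type*} [LinearOrder ι] [Countable ι] [Nonempty ι]
    {C : Set (Set β)}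
    (hC : ∀ f : ℕ → Set β, (∀ n, f n ∈ C) → (∀ n, f n ⊆ f (n + 1)) → (⋃ n, f n) ∈ C)
    {f : ι → Set β} (hf : Monotone f) (hfC : ∀ i, f i ∈ C) : (⋃ i, f i) ∈ C := by
  obtain ⟨e, he⟩ := exists_surjective_nat ι
  have hchain : (⋃ n, f (partialSups e n)) = ⋃ i, f i := by
    refine (iUnion_subset fun n => subset_iUnion f _).antisymm (iUnion_subset fun i => ?_)
    obtain ⟨n, rfl⟩ := he i
    exact (hf (le_partialSups e n)).trans (subset_iUnion (fun n => f (partialSups e n)) n)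
  rw [← hchain]
  exact hC _ (fun n => hfC _) fun n => hf (partialSups_monotone e n.le_succ)

theorem isClubBelow_closurePoints {κ : Ordinal.{0}} (hκ : ℵ₀ < κ.cof)
    {g : Ordinal.{0} → Ordinal.{0}} (hg : Monotone g) (hgκ : ∀ i < κ, g i < κ) :
    IsClubBelow κ {γ | 0 < γ ∧ γ < κ ∧ ∀ j < γ, g j < γ} := by
  refine ⟨fun γ hγ => hγ.2.1, fun β hβ => ?_, fun S hS ⟨γ, hγ⟩ hSκ => ?_⟩
  · have hlim : IsSuccLimit κ := Ordinal.one_lt_cof_iff.1 (one_lt_aleph0.trans hκ)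
    have hnfp : nfp (succ ∘ g) β < κ := nfp_lt_ord hκ (fun i hi => hlim.succ_lt (hgκ i hi)) hβ
    refine ⟨nfp (succ ∘ g) β, ⟨?_, hnfp, fun j hj => ?_⟩, le_nfp _ _⟩
    · exact (bot_le.trans_lt (lt_succ (g β))).trans_le (iterate_le_nfp _ β 1)
    · obtain ⟨n, hn⟩ := lt_nfp_iff.1 hj
      calc g j ≤ g ((succ ∘ g)^[n] β) := hg hn.le
        _ < (succ ∘ g)^[n + 1] β := by rw [Function.iterate_succ_apply']; exact lt_succ _
        _ ≤ _ := iterate_le_nfp _ β _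
  · have hbdd : BddAbove S := ⟨κ, fun x hx => (hS hx).2.1.le⟩
    refine ⟨(hS hγ).1.trans_le (le_csSup hbdd hγ), hSκ, fun j hj => ?_⟩
    obtain ⟨δ, hδS, hjδ⟩ := exists_lt_of_lt_csSup ⟨γ, hγ⟩ hj
    exact ((hS hδS).2.2 j hjδ).trans_le (le_csSup hbdd hδS)

noncomputable def hullChain (up : Set Ordinal.{0} → Set Ordinal.{0}) (τ : Set Ordinal.{0})
    (i : Ordinal.{0}) : Set Ordinal.{0} :=
  ⋃ j : Iio i, up (insert j.1 (hullChain up τ j.1 ∪ τ))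
termination_by i
decreasing_by exact j.2

noncomputable def hullStep (up : Set Ordinal.{0} → Set Ordinal.{0}) (τ : Set Ordinal.{0})
    (j : Ordinal.{0}) : Set Ordinal.{0} :=
  up (insert j (hullChain up τ j ∪ τ))

section HullChain

variable {up : Set Ordinal.{0} → Set Ordinal.{0}} {τ : Set Ordinal.{0}}

theorem hullChain_eq (i : Ordinal.{0}) : hullChain up τ i = ⋃ j : Iio i, hullStep up τ j := by
  rw [hullChain]; rfl

theorem hullStep_subset_hullChain {j i : Ordinal.{0}} (hji : j < i) :
    hullStep up τ j ⊆ hullChain up τ i := by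
  rw [hullChain_eq]
  exact subset_iUnion (fun k : Iio i => hullStep up τ k) ⟨j, hji⟩

theorem subset_hullStep (hup_sub : ∀ σ, σ ⊆ up σ) (j : Ordinal.{0}) :
    insert j (hullChain up τ j ∪ τ) ⊆ hullStep up τ j :=
  hup_sub _

theorem hullStep_mono (hup_sub : ∀ σ, σ ⊆ up σ) : Monotone (hullStep up τ) := fun j k hjk => by
  rcases hjk.eq_or_lt with rfl | hjk
  · exact subset_rfl
  · exact (hullStep_subset_hullChain hjk).trans
      ((subset_union_left.trans (subset_insert _ _)).trans (subset_hullStep hup_sub k))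

variable {κ : Ordinal.{0}} {C : Set (Set Ordinal.{0})}

theorem hullStep_mem (hκ : ω1 ≤ κ) (hC : IsClubIn κ C) (hup_mem : ∀ σ, MemCtble κ σ → up σ ∈ C)
    (hτ : MemCtble κ τ) {i : Ordinal.{0}} (hi : i < ω1) : hullStep up τ i ∈ C := by
  induction i using WellFoundedLT.induction with
  | _ i IH =>
  have hmem : ∀ j : Iio i, hullStep up τ j ∈ C := fun j => IH j j.2 (j.2.trans hi)
  have := (countable_Iio_of_lt_ω1 hi).to_subtype
  refine hup_mem _ ⟨?_, ?_, ?_⟩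
  · rw [hullChain_eq]
    exact ((countable_iUnion fun j => (hC.1 _ (hmem j)).1).union hτ.1).insert i
  · exact hτ.2.1.mono (subset_union_right.trans (subset_insert _ _))
  · rintro x (rfl | hx | hx)
    · exact hi.trans_le hκ
    · rw [hullChain_eq, mem_iUnion] at hx
      obtain ⟨j, hx⟩ := hx
      exact (hC.1 _ (hmem j)).2.2 x hx
    · exact hτ.2.2 x hx

theorem hullChain_mem (hκ : ω1 ≤ κ) (hC : IsClubIn κ C) (hup_sub : ∀ σ, σ ⊆ up σ)
    (hup_mem : ∀ σ, MemCtble κ σ → up σ ∈ C) (hτ : MemCtble κ τ) {i : Ordinal.{0}} (h0 : 0 < i)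
    (hi : i < ω1) : hullChain up τ i ∈ C := by
  have := (countable_Iio_of_lt_ω1 hi).to_subtype
  have : Nonempty (Iio i) := ⟨⟨0, h0⟩⟩
  rw [hullChain_eq]
  exact iUnion_mem_of_monotone hC.2.1 (fun j k hjk => hullStep_mono hup_sub hjk)
    fun j => hullStep_mem hκ hC hup_mem hτ (j.2.trans hi)

theorem meetO1_hullChain (hup_sub : ∀ σ, σ ⊆ up σ) {γ : Ordinal.{0}} (hγ : γ ≤ ω1)
    (hclosed : ∀ j < γ, hullStep up τ j ∩ Iio ω1 ⊆ Iio γ) : MeetO1 (hullChain up τ γ) γ := by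
  refine (subset_antisymm ?_ fun j hj => ⟨?_, hj.trans_le hγ⟩)
  · rintro x ⟨hx, hxω⟩
    rw [hullChain_eq, mem_iUnion] at hx
    obtain ⟨j, hx⟩ := hx
    exact hclosed j j.2 ⟨hx, hxω⟩
  · exact hullStep_subset_hullChain hj (subset_hullStep hup_sub j (mem_insert j _))

end HullChain

theorem exists_isClubBelow_meetO1 {κ : Ordinal.{0}} (hκ : ω1 ≤ κ) {C : Set (Set Ordinal.{0})}
    (hC : IsClubIn κ C) {τ : Set Ordinal.{0}} (hτ : MemCtble κ τ) :
    ∃ E, IsClubBelow ω1 E ∧ ∀ γ ∈ E, ∃ σ ∈ C, τ ⊆ σ ∧ MeetO1 σ γ := by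
  have hext : ∀ σ, ∃ ρ, σ ⊆ ρ ∧ (MemCtble κ σ → ρ ∈ C) := fun σ => by
    by_cases hσ : MemCtble κ σ
    · obtain ⟨ρ, hρC, hσρ⟩ := hC.2.2 σ hσ
      exact ⟨ρ, hσρ, fun _ => hρC⟩
    · exact ⟨σ, subset_rfl, fun h => absurd h hσ⟩
  choose up hup_sub hup_mem using hext
  have hbdd : ∀ j, BddAbove (hullStep up τ j ∩ Iio ω1) := fun j => ⟨ω1, fun x hx => hx.2.le⟩
  let g j := sSup (hullStep up τ j ∩ Iio ω1)
  have hg : Monotone g := fun j k hjk =>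
    csSup_le_csSup' (hbdd k) (inter_subset_inter_left _ (hullStep_mono hup_sub hjk))
  have hgω : ∀ i < ω1, g i < ω1 := fun i hi =>
    sSup_lt_ω1 ((hC.1 _ (hullStep_mem hκ hC hup_mem hτ hi)).1.mono inter_subset_left)
      inter_subset_right
  refine ⟨_, isClubBelow_closurePoints aleph0_lt_cof_ω1 hg hgω, ?_⟩
  rintro γ ⟨h0, hγ, hclosed⟩
  refine ⟨hullChain up τ γ, hullChain_mem hκ hC hup_sub hup_mem hτ h0 hγ, ?_,
    meetO1_hullChain hup_sub hγ.le fun j hj x hx => (le_csSup (hbdd j) hx).trans_lt (hclosed j hj)⟩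
  exact (subset_union_right.trans (subset_insert 0 _)).trans
    ((subset_hullStep hup_sub 0).trans (hullStep_subset_hullChain h0))

theorem memCtble_seed {α : Ordinal.{0}} (hα : α < ω2) :
    MemCtble ω2 (insert ω1 (insert α (Iio ω))) := by
  have hω : ω < ω1 := ω1_eq_omega_one ▸ omega0_lt_omega_one
  refine ⟨((countable_Iio_of_lt_ω1 hω).insert α).insert ω1, ?_, ?_⟩
  · exact (infinite_of_injective_forall_mem Nat.cast_injective natCast_lt_omega0).mono
      ((subset_insert _ _).trans (subset_insert _ _))
  · rintro x (rfl | rfl | hx)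
    · exact ω1_lt_ω2
    · exact hα
    · exact (hx.trans hω).trans ω1_lt_ω2

theorem antichain_projective_stationary_general (A : Ordinal.{0} → Set Ordinal.{0})
    (hmax : ∀ S : Set Ordinal.{0}, (∀ x ∈ S, x < ω1) → StatBelow ω1 S →
      ∃ α < ω2, StatBelow ω1 (S ∩ A α)) :
    ∀ B : Set Ordinal.{0}, (∀ x ∈ B, x < ω1) → StatBelow ω1 B →
      StatIn ω2 {σ | MemCtble ω2 σ ∧ ω1 ∈ σ ∧
        ∃ γ, MeetO1 σ γ ∧ γ ∈ B ∧ ∃ α ∈ σ, γ ∈ A α} := by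
  intro B hB hBstat C hC
  obtain ⟨α, hα, hBA⟩ := hmax B hB hBstat
  obtain ⟨E, hE, hEσ⟩ := exists_isClubBelow_meetO1 ω1_lt_ω2.le hC (memCtble_seed hα)
  obtain ⟨γ, ⟨hγB, hγA⟩, hγE⟩ := hBA E hE
  obtain ⟨σ, hσC, hseed, hσγ⟩ := hEσ γ hγE
  exact ⟨σ, ⟨hC.1 σ hσC, hseed (mem_insert _ _), γ, hσγ, hγB, α,
    hseed (mem_insert_of_mem _ (mem_insert _ _)), hγA⟩, hσC⟩

theorem antichain_projective_stationary (A : Ordinal.{0} → Set Ordinal.{0})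
    (hsub : ∀ α < ω2, ∀ x ∈ A α, x < ω1)
    (hstat : ∀ α < ω2, StatBelow ω1 (A α))
    (had : ∀ α < ω2, ∀ β < ω2, α ≠ β → ¬ StatBelow ω1 (A α ∩ A β))
    (hmax : ∀ S : Set Ordinal.{0}, (∀ x ∈ S, x < ω1) → StatBelow ω1 S →
      ∃ α < ω2, StatBelow ω1 (S ∩ A α)) :
    ∀ B : Set Ordinal.{0}, (∀ x ∈ B, x < ω1) → StatBelow ω1 B →
      StatIn ω2 {σ | MemCtble ω2 σ ∧ ω1 ∈ σ ∧
        ∃ γ, MeetO1 σ γ ∧ γ ∈ B ∧ ∃ α ∈ σ, γ ∈ A α} :=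
  antichain_projective_stationary_general A hmax
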